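/- arXiv:2511.07758 — 2 statements merged into one kernel-verified Lean document; each statement's English description precedes it below -/
import Mathlib

section
/- Every 2-connected [4,2]-graph of order n ≥ 10 has at least ⌊(n−1)²/4⌋ + 2 edges, with equality if and only if G is obtained from the disjoint union K_{⌊n/2⌋} + K_{⌈n/2⌉} by adding two edges between the two cliques so that the resulting graph is 2-connected (i.e., the two added edges form a matching). -/
open SimpleGraph

/-- The number of edges of `G` both of whose endpoints lie in `S`. -/
noncomputable def edgesWithin {V : Type*} (G : SimpleGraph V) (S : Finset V) : ℕ :=
  {e : Sym2 V | e ∈ G.edgeSet ∧ ∀ v ∈ e, v ∈ S}.ncard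

/-- `G` is an `[s,t]`-graph: order at least `s`, and every induced subgraph on
`s` vertices has at least `t` edges. -/
def IsSTGraph {V : Type*} [Fintype V] (G : SimpleGraph V) (s t : ℕ) : Prop :=
  s ≤ Fintype.card V ∧ ∀ S : Finset V, S.card = s → t ≤ edgesWithin G S

/-- `G` is 2-connected: at least 3 vertices, and deleting any single vertex
leaves a connected graph. -/
def TwoConnected {V : Type*} [Fintype V] (G : SimpleGraph V) : Prop :=
  3 ≤ Fintype.card V ∧ ∀ v : V, (G.induce {w : V | w ≠ v}).Connected

/-- The edge `e` lies on a cycle of length `k` in `G`. -/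
def EdgeOnCycle {V : Type*} (G : SimpleGraph V) (e : Sym2 V) (k : ℕ) : Prop :=
  ∃ (u : V) (w : G.Walk u u), w.IsCycle ∧ w.length = k ∧ e ∈ w.edges

/-- `G` has a cycle of length `k`. -/
def HasCycleLen {V : Type*} (G : SimpleGraph V) (k : ℕ) : Prop :=
  ∃ (u : V) (w : G.Walk u u), w.IsCycle ∧ w.length = k

section Aux
open Finset
set_option linter.unusedSectionVars false

universe u
variable {W : Type u} [Fintype W] [DecidableEq W]



instance instDecInduceAdj (H : SimpleGraph W) [DecidableRel H.Adj] (s : Set W) :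
    DecidableRel (H.induce s).Adj := fun a b => decidable_of_iff (H.Adj a b) (by simp)

/-- Edges not touching T inject into the induced graph on the complement. -/
lemma aux_no_touch_le (H : SimpleGraph W) [DecidableRel H.Adj] (T : Finset W) :
    (H.edgeFinset.filter (fun e => ¬ ∃ v ∈ e, v ∈ T)).card
      ≤ (H.induce ((↑(Tᶜ) : Set W))).edgeFinset.card := by
  classical
  calc (H.edgeFinset.filter (fun e => ¬ ∃ v ∈ e, v ∈ T)).card
      ≤ ((H.induce ((↑(Tᶜ) : Set W))).edgeFinset.image (Sym2.map Subtype.val)).card := by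
        apply Finset.card_le_card
        intro e he
        simp only [Finset.mem_filter, mem_edgeFinset, mem_edgeSet] at he
        obtain ⟨he1, he2⟩ := he
        induction e with
        | _ a b =>
          have ha : a ∈ (↑(Tᶜ) : Set W) := by
            simp only [Finset.coe_compl, Set.mem_compl_iff, Finset.mem_coe]
            intro h; exact he2 ⟨a, by simp, h⟩
          have hb : b ∈ (↑(Tᶜ) : Set W) := by
            simp only [Finset.coe_compl, Set.mem_compl_iff, Finset.mem_coe]
            intro h; exact he2 ⟨b, by simp, h⟩
          refine Finset.mem_image.2 ⟨s(⟨a, ha⟩, ⟨b, hb⟩), ?_, by simp⟩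
          simp only [mem_edgeFinset, mem_edgeSet]
          exact he1
    _ ≤ (H.induce ((↑(Tᶜ) : Set W))).edgeFinset.card :=
        Finset.card_image_le

lemma aux_del (H : SimpleGraph W) [DecidableRel H.Adj] (T : Finset W) :
    H.edgeFinset.card ≤ (H.induce ((↑(Tᶜ) : Set W))).edgeFinset.card
      + (H.edgeFinset.filter (fun e => ∃ v ∈ e, v ∈ T)).card := by
  classical
  have h := Finset.card_filter_add_card_filter_not
    (s := H.edgeFinset) (p := fun e => ∃ v ∈ e, v ∈ T)
  have := aux_no_touch_le H T
  omega


/-- Edges touching T: at most (edges inside T) + (n - |T|), provided each vertex outside T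
has at most one neighbor in T. -/
lemma aux_touch_le (H : SimpleGraph W) [DecidableRel H.Adj] (T : Finset W) (x₀ : W)
    (h1 : ∀ u ∉ T, ∀ a ∈ T, ∀ b ∈ T, H.Adj u a → H.Adj u b → a = b) :
    (H.edgeFinset.filter (fun e => ∃ v ∈ e, v ∈ T)).card
      ≤ (H.edgeFinset.filter (fun e => ∀ v ∈ e, v ∈ T)).card + (Fintype.card W - T.card) := by
  classical
  set s := H.edgeFinset.filter (fun e => ∃ v ∈ e, v ∈ T) with hs
  have hsplit := Finset.card_filter_add_card_filter_not
    (s := s) (p := fun e => ∀ v ∈ e, v ∈ T)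
  have hin : (s.filter (fun e => ∀ v ∈ e, v ∈ T)).card
      ≤ (H.edgeFinset.filter (fun e => ∀ v ∈ e, v ∈ T)).card := by
    apply Finset.card_le_card
    intro e he
    simp only [hs, Finset.mem_filter, Finset.filter_filter] at he ⊢
    tauto
  have hout : (s.filter (fun e => ¬ ∀ v ∈ e, v ∈ T)).card ≤ Fintype.card W - T.card := by
    have : (s.filter (fun e => ¬ ∀ v ∈ e, v ∈ T)).card ≤ Tᶜ.card := by
      apply Finset.card_le_card_of_injOn
        (fun e => if h : ∃ v ∈ e, v ∉ T then h.choose else x₀)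
      · intro e he
        simp only [hs, Finset.mem_coe, Finset.mem_filter] at he
        obtain ⟨⟨_, _⟩, hne⟩ := he
        push_neg at hne
        obtain ⟨v, hv, hvT⟩ := hne
        have hex : ∃ v ∈ e, v ∉ T := ⟨v, hv, hvT⟩
        dsimp only
        rw [dif_pos hex]
        simpa using hex.choose_spec.2
      · intro e₁ he₁ e₂ he₂ heq
        simp only [hs, Finset.coe_filter, Set.mem_setOf_eq, Finset.mem_filter,
          mem_edgeFinset] at he₁ he₂
        obtain ⟨⟨he₁e, v₁, hv₁, hv₁T⟩, hn₁⟩ := he₁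
        obtain ⟨⟨he₂e, v₂, hv₂, hv₂T⟩, hn₂⟩ := he₂
        push_neg at hn₁ hn₂
        obtain ⟨w₁, hw₁, hw₁T⟩ := hn₁
        obtain ⟨w₂, hw₂, hw₂T⟩ := hn₂
        have hex₁ : ∃ v ∈ e₁, v ∉ T := ⟨w₁, hw₁, hw₁T⟩
        have hex₂ : ∃ v ∈ e₂, v ∉ T := ⟨w₂, hw₂, hw₂T⟩
        dsimp only at heq
        rw [dif_pos hex₁, dif_pos hex₂] at heq
        obtain ⟨hu₁, hu₁T⟩ := hex₁.choose_spec
        obtain ⟨hu₂, hu₂T⟩ := hex₂.choose_spec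
        set u := hex₁.choose
        rw [← heq] at hu₂ hu₂T
        -- e₁ = s(u, c₁) with c₁ ∈ T
        obtain ⟨c₁, h₁eq⟩ := Sym2.mem_iff_exists.1 hu₁
        obtain ⟨c₂, h₂eq⟩ := Sym2.mem_iff_exists.1 hu₂
        rw [h₁eq] at hv₁ he₁e
        rw [h₂eq] at hv₂ he₂e
        have hc₁T : c₁ ∈ T := by
          rcases Sym2.mem_iff.1 hv₁ with rfl | rfl
          · exact absurd hv₁T hu₁T
          · exact hv₁T
        have hc₂T : c₂ ∈ T := by
          rcases Sym2.mem_iff.1 hv₂ with rfl | rfl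
          · exact absurd hv₂T hu₂T
          · exact hv₂T
        have hadj₁ : H.Adj u c₁ := he₁e
        have hadj₂ : H.Adj u c₂ := he₂e
        rw [h₁eq, h₂eq, h1 u hu₁T c₁ hc₁T c₂ hc₂T hadj₁ hadj₂]
    simpa [Finset.card_compl] using this
  omega


lemma aux_card_compl_coe (T : Finset W) :
    Fintype.card (↑(Tᶜ) : Set W) = Fintype.card W - T.card := by
  have : Fintype.card (↑(Tᶜ) : Set W) = Fintype.card (↑(Tᶜ) : Finset W) :=
    Fintype.card_congr (Equiv.subtypeEquivRight (by simp))
  rw [this, Fintype.card_coe, Finset.card_compl]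

lemma aux_within_pair (H : SimpleGraph W) [DecidableRel H.Adj] (u v : W) :
    (H.edgeFinset.filter (fun e => ∀ w ∈ e, w ∈ ({u, v} : Finset W))).card ≤ 1 := by
  classical
  have hsub : H.edgeFinset.filter (fun e => ∀ w ∈ e, w ∈ ({u, v} : Finset W))
      ⊆ {s(u, v)} := by
    intro e he
    simp only [Finset.mem_filter, mem_edgeFinset, mem_edgeSet] at he
    obtain ⟨hadj, hmem⟩ := he
    induction e with
    | _ a b =>
      have ha := hmem a (by simp)
      have hb := hmem b (by simp)
      have hne : a ≠ b := hadj.ne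
      simp only [Finset.mem_insert, Finset.mem_singleton] at ha hb
      simp only [Finset.mem_singleton]
      rcases ha with rfl | rfl <;> rcases hb with rfl | rfl
      · exact absurd rfl hne
      · rfl
      · exact Sym2.eq_swap
      · exact absurd rfl hne
  simpa using Finset.card_le_card hsub

lemma aux_within_triple (H : SimpleGraph W) [DecidableRel H.Adj] (x y z : W) :
    (H.edgeFinset.filter (fun e => ∀ w ∈ e, w ∈ ({x, y, z} : Finset W))).card ≤ 3 := by
  classical
  have hsub : H.edgeFinset.filter (fun e => ∀ w ∈ e, w ∈ ({x, y, z} : Finset W))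
      ⊆ {s(x, y), s(y, z), s(x, z)} := by
    intro e he
    simp only [Finset.mem_filter, mem_edgeFinset, mem_edgeSet] at he
    obtain ⟨hadj, hmem⟩ := he
    induction e with
    | _ a b =>
      have ha := hmem a (by simp)
      have hb := hmem b (by simp)
      have hne : a ≠ b := hadj.ne
      simp only [Finset.mem_insert, Finset.mem_singleton] at ha hb
      simp only [Finset.mem_insert, Finset.mem_singleton]
      rcases ha with rfl | rfl | rfl <;> rcases hb with rfl | rfl | rfl <;>
        simp_all [Sym2.eq_swap, Sym2.eq_iff]
  calc _ ≤ ({s(x, y), s(y, z), s(x, z)} : Finset (Sym2 W)).card := Finset.card_le_card hsub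
    _ ≤ 3 := by
      apply le_trans (Finset.card_insert_le _ _)
      have := Finset.card_insert_le (s(y,z)) ({s(x,z)} : Finset (Sym2 W))
      simp at this ⊢
      omega


/-- no K4 minus an edge: no edge in two triangles -/
def NoK4m {W : Type u} (H : SimpleGraph W) : Prop :=
  ∀ x y z w, H.Adj x y → H.Adj y z → H.Adj z x → H.Adj x w → H.Adj y w → z = w



/-- Mantel: triangle-free graphs have at most n²/4 edges (as 4e ≤ n²). -/
lemma mantel_aux : ∀ (n : ℕ) (W : Type u) (_ : Fintype W) (_ : DecidableEq W)
    (H : SimpleGraph W) (_ : DecidableRel H.Adj), Fintype.card W = n →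
    (∀ a b c, H.Adj a b → H.Adj b c → ¬ H.Adj a c) →
    4 * H.edgeFinset.card ≤ n ^ 2 := by
  intro n
  induction n using Nat.strong_induction_on with
  | _ n IH =>
  intro W _ _ H _ hcard htf
  by_cases hE : ∃ a b, H.Adj a b
  · obtain ⟨a, b, hab⟩ := hE
    set T : Finset W := {a, b} with hT
    have hTcard : T.card = 2 := by
      rw [hT, Finset.card_insert_of_notMem (by simp [hab.ne]), Finset.card_singleton]
    have hTn : T.card ≤ n := hcard ▸ Finset.card_le_univ T
    have hn2 : 2 ≤ n := hTcard ▸ hTn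
    have h1 : ∀ u ∉ T, ∀ c ∈ T, ∀ d ∈ T, H.Adj u c → H.Adj u d → c = d := by
      intro u hu c hc d hd huc hud
      simp only [hT, Finset.mem_insert, Finset.mem_singleton] at hc hd
      rcases hc with rfl | rfl <;> rcases hd with rfl | rfl
      · rfl
      · exact absurd hab (htf c u d huc.symm hud)
      · exact absurd hab (htf d u c hud.symm huc)
      · rfl
    have hdel := aux_del H T
    have htouch := aux_touch_le H T a h1
    have hwithin : (H.edgeFinset.filter (fun e => ∀ v ∈ e, v ∈ T)).card ≤ 1 :=
      aux_within_pair H a b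
    have hinnertf : ∀ p q r, (H.induce (↑(Tᶜ) : Set W)).Adj p q →
        (H.induce (↑(Tᶜ) : Set W)).Adj q r → ¬ (H.induce (↑(Tᶜ) : Set W)).Adj p r := by
      intro p q r h1' h2' h3'
      exact htf p q r h1' h2' h3'
    have hinner := IH (n - 2) (by omega) (↑(Tᶜ) : Set W) inferInstance inferInstance
      (H.induce (↑(Tᶜ) : Set W)) inferInstance
      (by rw [aux_card_compl_coe T, hTcard, hcard]) hinnertf
    have harith : (n - 2) ^ 2 + 4 * (n - 1) = n ^ 2 := by
      obtain ⟨m, rfl⟩ : ∃ m, n = m + 2 := ⟨n - 2, by omega⟩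
      simp only [Nat.add_sub_cancel]
      ring_nf
      omega
    omega
  · have : H.edgeFinset = ∅ := by
      ext e
      simp only [mem_edgeFinset, Finset.notMem_empty, iff_false]
      induction e with
      | _ p q => rw [mem_edgeSet]; exact fun h => hE ⟨p, q, h⟩
    simp [this]

def bnd (n : ℕ) : ℕ := if n = 3 then 3 else n ^ 2 / 4

lemma aux_bnd_step {n : ℕ} (hn : 3 ≤ n) : bnd (n - 3) + n ≤ bnd n := by
  rcases Nat.lt_or_ge n 8 with h | h
  · interval_cases n <;> simp [bnd]
  · obtain ⟨m, rfl⟩ : ∃ m, n = m + 8 := ⟨n - 8, by omega⟩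
    have h3 : ¬ (m + 8 = 3) := by omega
    have h3' : ¬ (m + 8 - 3 = 3) := by omega
    simp only [bnd, if_neg h3, if_neg h3']
    have he : m + 8 - 3 = m + 5 := by omega
    rw [he]
    have h1 : (m + 5) ^ 2 / 4 + (m + 8) = ((m + 5) ^ 2 + (m + 8) * 4) / 4 := by
      rw [Nat.add_mul_div_right _ _ (by norm_num)]
    rw [h1]
    apply Nat.div_le_div_right
    nlinarith

lemma aux_tri10 {n : ℕ} (hn : 10 ≤ n) : bnd (n - 3) + n + 3 ≤ n ^ 2 / 4 := by
  rcases Nat.lt_or_ge n 11 with h | h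
  · have : n = 10 := by omega
    subst this; simp [bnd]
  · obtain ⟨m, rfl⟩ : ∃ m, n = m + 11 := ⟨n - 11, by omega⟩
    have h3' : ¬ (m + 11 - 3 = 3) := by omega
    simp only [bnd, if_neg h3']
    have he : m + 11 - 3 = m + 8 := by omega
    rw [he]
    have h1 : (m + 8) ^ 2 / 4 + (m + 11) + 3 = ((m + 8) ^ 2 + (m + 14) * 4) / 4 := by
      rw [Nat.add_mul_div_right _ _ (by norm_num)]
      omega
    rw [h1]
    apply Nat.div_le_div_right
    nlinarith

/-- one deletion step for a triangle in a K4⁻-free graph -/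
lemma tri_step {W : Type u} [Fintype W] [DecidableEq W] (H : SimpleGraph W) [DecidableRel H.Adj]
    (hK4 : NoK4m H) (x y z : W) (hxy : H.Adj x y) (hyz : H.Adj y z) (hzx : H.Adj z x) :
    H.edgeFinset.card ≤
      (H.induce (↑(({x, y, z} : Finset W)ᶜ) : Set W)).edgeFinset.card + Fintype.card W := by
  classical
  set T : Finset W := {x, y, z} with hT
  have hTcard : T.card = 3 := by
    rw [hT]
    rw [Finset.card_insert_of_notMem (by simp [hxy.ne, hzx.ne.symm]),
      Finset.card_insert_of_notMem (by simp [hyz.ne]), Finset.card_singleton]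
  have hTn : 3 ≤ Fintype.card W := hTcard ▸ Finset.card_le_univ T
  have h1 : ∀ u ∉ T, ∀ c ∈ T, ∀ d ∈ T, H.Adj u c → H.Adj u d → c = d := by
    intro u hu c hc d hd huc hud
    simp only [hT, Finset.mem_insert, Finset.mem_singleton] at hc hd hu
    push_neg at hu
    obtain ⟨hux, huy, huz⟩ := hu
    rcases hc with rfl | rfl | rfl <;> rcases hd with rfl | rfl | rfl
    · rfl
    · exact absurd (hK4 c d z u hxy hyz hzx huc.symm hud.symm) (Ne.symm huz)
    · exact absurd (hK4 c d y u hzx.symm hyz.symm hxy.symm huc.symm hud.symm) (Ne.symm huy)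
    · exact absurd (hK4 c d z u hxy.symm hzx.symm hyz.symm huc.symm hud.symm) (Ne.symm huz)
    · rfl
    · exact absurd (hK4 c d x u hyz hzx hxy huc.symm hud.symm) (Ne.symm hux)
    · exact absurd (hK4 c d y u hzx hxy hyz huc.symm hud.symm) (Ne.symm huy)
    · exact absurd (hK4 c d x u hyz.symm hxy.symm hzx.symm huc.symm hud.symm) (Ne.symm hux)
    · rfl
  have hdel := aux_del H T
  have htouch := aux_touch_le H T x h1
  have hwithin : (H.edgeFinset.filter (fun e => ∀ v ∈ e, v ∈ T)).card ≤ 3 :=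
    aux_within_triple H x y z
  omega

/-- K4⁻-free graphs have at most `bnd n` edges. -/
lemma k4m_aux : ∀ (n : ℕ) (W : Type u) (_ : Fintype W) (_ : DecidableEq W)
    (H : SimpleGraph W) (_ : DecidableRel H.Adj), Fintype.card W = n →
    NoK4m H → H.edgeFinset.card ≤ bnd n := by
  intro n
  induction n using Nat.strong_induction_on with
  | _ n IH =>
  intro W _ _ H _ hcard hK4
  by_cases hE : ∃ x y z, H.Adj x y ∧ H.Adj y z ∧ H.Adj z x
  · obtain ⟨x, y, z, hxy, hyz, hzx⟩ := hE
    set T : Finset W := {x, y, z} with hT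
    have hTcard : T.card = 3 := by
      rw [hT]
      rw [Finset.card_insert_of_notMem (by simp [hxy.ne, hzx.ne.symm]),
        Finset.card_insert_of_notMem (by simp [hyz.ne]), Finset.card_singleton]
    have hTn : 3 ≤ n := hcard ▸ hTcard ▸ Finset.card_le_univ T
    have hstep := tri_step H hK4 x y z hxy hyz hzx
    rw [← hT] at hstep
    have hinnerK4 : NoK4m (H.induce (↑(Tᶜ) : Set W)) := by
      intro p q r s h1 h2 h3 h4 h5
      exact Subtype.ext (hK4 p q r s h1 h2 h3 h4 h5)
    have hinner := IH (n - 3) (by omega) (↑(Tᶜ) : Set W) inferInstance inferInstance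
      (H.induce (↑(Tᶜ) : Set W)) inferInstance
      (by rw [aux_card_compl_coe T, hTcard, hcard]) hinnerK4
    have := aux_bnd_step hTn
    omega
  · -- triangle-free
    have htf : ∀ a b c, H.Adj a b → H.Adj b c → ¬ H.Adj a c := by
      intro a b c h1 h2 h3
      exact hE ⟨a, b, c, h1, h2, h3.symm⟩
    have h4 := mantel_aux n W inferInstance inferInstance H inferInstance hcard htf
    have : H.edgeFinset.card ≤ n ^ 2 / 4 := by omega
    unfold bnd
    split
    · next h =>
        have h2 : (3:ℕ) ^ 2 / 4 = 2 := by norm_num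
        rw [h, h2] at this; omega
    · exact this

/-- in a K4⁻-free graph of order ≥ 10 with a triangle, e ≤ n²/4 - 3. -/
lemma k4m_triangle_bound (H : SimpleGraph W) [DecidableRel H.Adj] (hK4 : NoK4m H)
    (hn : 10 ≤ Fintype.card W) (x y z : W) (hxy : H.Adj x y) (hyz : H.Adj y z) (hzx : H.Adj z x) :
    H.edgeFinset.card + 3 ≤ Fintype.card W ^ 2 / 4 := by
  classical
  set T : Finset W := {x, y, z} with hT
  have hstep := tri_step H hK4 x y z hxy hyz hzx
  rw [← hT] at hstep
  have hinnerK4 : NoK4m (H.induce (↑(Tᶜ) : Set W)) := by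
    intro p q r s h1 h2 h3 h4 h5
    exact Subtype.ext (hK4 p q r s h1 h2 h3 h4 h5)
  have hTcard : T.card = 3 := by
    rw [hT]
    rw [Finset.card_insert_of_notMem (by simp [hxy.ne, hzx.ne.symm]),
      Finset.card_insert_of_notMem (by simp [hyz.ne]), Finset.card_singleton]
  have hinner := k4m_aux (Fintype.card W - 3) (↑(Tᶜ) : Set W) inferInstance inferInstance
    (H.induce (↑(Tᶜ) : Set W)) inferInstance
    (by rw [aux_card_compl_coe T, hTcard]) hinnerK4
  have := aux_tri10 hn
  omega


lemma aux_sq_mod (n : ℕ) : n ^ 2 % 4 = 0 ∨ n ^ 2 % 4 = 1 := by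
  rcases Nat.even_or_odd n with ⟨k, rfl⟩ | ⟨k, rfl⟩
  · left
    have h : (k + k) ^ 2 = 4 * (k * k) := by ring
    rw [h]; simp [Nat.mul_mod_right]
  · right
    have h : (2 * k + 1) ^ 2 = 4 * (k * k + k) + 1 := by ring
    rw [h, Nat.mul_add_mod]

lemma aux_foursq (n : ℕ) : n ^ 2 ≤ 4 * (n ^ 2 / 4) + 1 ∧ 4 * (n ^ 2 / 4) ≤ n ^ 2 := by
  have h := Nat.div_add_mod (n ^ 2) 4
  have := aux_sq_mod n
  omega

lemma aux_amgm (a b : ℕ) : a * b ≤ (a + b) ^ 2 / 4 := by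
  rw [Nat.le_div_iff_mul_le (by norm_num)]
  zify
  nlinarith [sq_nonneg ((a:ℤ) - b)]

lemma aux_swap (H : SimpleGraph W) [DecidableRel H.Adj] (s t : Finset W) :
    (∑ u ∈ s, (t.filter (H.Adj u)).card) = ∑ u ∈ t, (s.filter (H.Adj u)).card := by
  simp only [Finset.card_filter]
  rw [Finset.sum_comm]
  exact Finset.sum_congr rfl fun w _ => Finset.sum_congr rfl fun u _ => if_congr (H.adj_comm u w) rfl rfl

/-- Structure of near-extremal triangle-free graphs of order ≥ 10:
the vertex set splits into two independent sets of size ≥ 2. -/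
lemma structure_aux (H : SimpleGraph W) [DecidableRel H.Adj]
    (htf : ∀ a b c, H.Adj a b → H.Adj b c → ¬ H.Adj a c)
    (hn : 10 ≤ Fintype.card W)
    (he : Fintype.card W ^ 2 / 4 ≤ H.edgeFinset.card + 2) :
    ∃ A : Finset W,
      (∀ a ∈ A, ∀ b ∈ A, ¬ H.Adj a b) ∧
      (∀ a ∈ Aᶜ, ∀ b ∈ Aᶜ, ¬ H.Adj a b) ∧
      2 ≤ A.card ∧ 2 ≤ Aᶜ.card := by
  classical
  set n := Fintype.card W with hndef
  set F := n ^ 2 / 4 with hFdef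
  have hF := aux_foursq n
  have hnn : 10 * n ≤ n * n := Nat.mul_le_mul_right n hn
  have hn2 : n ^ 2 = n * n := sq n
  have : Nonempty W := Fintype.card_pos_iff.mp (by omega)
  obtain ⟨v, hv⟩ := H.exists_maximal_degree_vertex
  set Δ := H.maxDegree with hΔdef
  set A := H.neighborFinset v with hAdef
  have hA : A.card = Δ := by rw [hAdef, card_neighborFinset_eq_degree, ← hv]
  have hAn : Δ ≤ n := hA ▸ Finset.card_le_univ A
  set B := Aᶜ with hBdef
  have hBcard : B.card = n - Δ := by rw [hBdef, Finset.card_compl, hA]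
  have hAind : ∀ a ∈ A, ∀ b ∈ A, ¬ H.Adj a b := by
    intro a ha b hb hab
    rw [hAdef, mem_neighborFinset] at ha hb
    exact htf a v b ha.symm hb hab
  set e := H.edgeFinset.card with hedef
  set na : W → ℕ := fun u => (A.filter (H.Adj u)).card with hnadef
  set nb : W → ℕ := fun u => (B.filter (H.Adj u)).card with hnbdef
  have hdeg : ∀ u, H.degree u = na u + nb u := by
    intro u
    rw [← card_neighborFinset_eq_degree, neighborFinset_eq_filter]
    rw [← Finset.union_compl A, Finset.filter_union]
    rw [Finset.card_union_of_disjoint]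
    exact Finset.disjoint_filter_filter disjoint_compl_right
  set c := ∑ u ∈ A, nb u with hcdef
  set q := ∑ u ∈ B, nb u with hqdef
  set tB := ∑ u ∈ B, (Δ - H.degree u) with htBdef
  have h2e : ∑ u, H.degree u = 2 * e := H.sum_degrees_eq_twice_card_edges
  have hsplit : ∑ u ∈ A, H.degree u + ∑ u ∈ B, H.degree u = ∑ u, H.degree u :=
    Finset.sum_add_sum_compl A _
  have hsumA : ∑ u ∈ A, H.degree u = c := by
    apply Finset.sum_congr rfl
    intro u hu
    rw [hdeg u]
    have : na u = 0 := by
      rw [hnadef]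
      simp only [Finset.card_eq_zero, Finset.filter_eq_empty_iff]
      intro b hb
      exact hAind u hu b hb
    omega
  have hsumB : ∑ u ∈ B, H.degree u = c + q := by
    have h1 : ∑ u ∈ B, H.degree u = ∑ u ∈ B, na u + ∑ u ∈ B, nb u := by
      rw [← Finset.sum_add_distrib]
      exact Finset.sum_congr rfl fun u _ => hdeg u
    have h2 : ∑ u ∈ B, na u = c := by
      rw [hnadef, hcdef, hnbdef]
      exact aux_swap H B A
    omega
  have hdegle : ∀ u, H.degree u ≤ Δ := fun u => H.degree_le_maxDegree u
  have htB : ∑ u ∈ B, H.degree u + tB = B.card * Δ := by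
    rw [htBdef, ← Finset.sum_add_distrib]
    have : ∀ u ∈ B, H.degree u + (Δ - H.degree u) = Δ := fun u _ => by
      have := hdegle u; omega
    rw [Finset.sum_congr rfl this, Finset.sum_const, smul_eq_mul]
  have hPF : B.card * Δ ≤ F := by
    have h1 : B.card * Δ ≤ (B.card + Δ) ^ 2 / 4 := aux_amgm _ _
    have h2 : B.card + Δ = n := by omega
    rwa [h2] at h1
  have hq4 : q + 2 * tB ≤ 4 := by omega
  have hsum_le : 2 * e ≤ n * Δ := by
    rw [← h2e]
    calc ∑ u, H.degree u ≤ (Finset.univ.card) • Δ :=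
          Finset.sum_le_card_nsmul _ _ _ fun u _ => hdegle u
      _ = n * Δ := by rw [Finset.card_univ, smul_eq_mul]
  have hq0 : q = 0 := by
    by_contra hq
    have : ∃ x ∈ B, nb x ≠ 0 := by
      by_contra hall
      push_neg at hall
      exact hq (Finset.sum_eq_zero hall)
    obtain ⟨x, hxB, hnbx⟩ := this
    obtain ⟨y, hy⟩ := Finset.card_pos.mp (Nat.pos_of_ne_zero hnbx)
    rw [Finset.mem_filter] at hy
    obtain ⟨hyB, hxy⟩ := hy
    have hxyne : x ≠ y := hxy.ne
    have hsum_pair : nb x + nb y ≤ q := by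
      have h1 : ∑ u ∈ ({x, y} : Finset W), nb u = nb x + nb y := Finset.sum_pair hxyne
      have h2 : ({x, y} : Finset W) ⊆ B := by
        rw [Finset.insert_subset_iff, Finset.singleton_subset_iff]
        exact ⟨hxB, hyB⟩
      calc nb x + nb y = ∑ u ∈ ({x, y} : Finset W), nb u := h1.symm
        _ ≤ q := Finset.sum_le_sum_of_subset h2
    have htx : Δ ≤ H.degree x + tB := by
      have h1 : Δ - H.degree x ≤ tB :=
        Finset.single_le_sum (f := fun u => Δ - H.degree u) (fun u _ => Nat.zero_le _) hxB
      have := hdegle x; omega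
    have hty : Δ ≤ H.degree y + tB := by
      have h1 : Δ - H.degree y ≤ tB :=
        Finset.single_le_sum (f := fun u => Δ - H.degree u) (fun u _ => Nat.zero_le _) hyB
      have := hdegle y; omega
    have hdisj : Disjoint (A.filter (H.Adj x)) (A.filter (H.Adj y)) := by
      rw [Finset.disjoint_left]
      intro w hw1 hw2
      rw [Finset.mem_filter] at hw1 hw2
      exact htf x w y hw1.2 hw2.2.symm hxy
    have hcup : na x + na y ≤ Δ := by
      rw [← hA]
      rw [← Finset.card_union_of_disjoint hdisj]
      apply Finset.card_le_card
      exact Finset.union_subset (Finset.filter_subset _ _) (Finset.filter_subset _ _)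
    have hdx := hdeg x
    have hdy := hdeg y
    have hΔ4 : Δ ≤ 4 := by omega
    have h4n : n * Δ ≤ n * 4 := Nat.mul_le_mul_left n hΔ4
    omega
  have hBind : ∀ a ∈ B, ∀ b ∈ B, ¬ H.Adj a b := by
    intro a ha b hb hab
    have h1 : 1 ≤ nb a := by
      rw [hnbdef]
      apply Finset.card_pos.mpr
      exact ⟨b, Finset.mem_filter.mpr ⟨hb, hab⟩⟩
    have h2 : nb a ≤ q := Finset.single_le_sum (f := nb) (fun u _ => Nat.zero_le _) ha
    omega
  refine ⟨A, hAind, hBind, ?_, ?_⟩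
  · rw [hA]
    by_contra hΔ1
    push_neg at hΔ1
    have : n * Δ ≤ n * 1 := Nat.mul_le_mul_left n (by omega)
    omega
  · rw [hBcard]
    by_contra hB1
    push_neg at hB1
    have h1 : B.card * Δ ≤ 1 * Δ := Nat.mul_le_mul_right Δ (by omega)
    omega


lemma aux_cross_count (G : SimpleGraph W) [DecidableRel G.Adj] (A : Finset W)
    (h1 : ∀ a ∈ A, ∀ b ∈ A, a ≠ b → G.Adj a b)
    (h2 : ∀ a ∈ Aᶜ, ∀ b ∈ Aᶜ, a ≠ b → G.Adj a b) :
    Gᶜ.edgeFinset.card + ((A ×ˢ Aᶜ).filter (fun p => G.Adj p.1 p.2)).card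
      = A.card * Aᶜ.card := by
  classical
  have key : ((A ×ˢ Aᶜ).filter (fun p => ¬ G.Adj p.1 p.2)).card = Gᶜ.edgeFinset.card := by
    apply Finset.card_bij (fun p _ => s(p.1, p.2))
    · intro p hp
      simp only [Finset.mem_filter, Finset.mem_product, Finset.mem_compl] at hp
      obtain ⟨⟨hpA, hpB⟩, hna⟩ := hp
      rw [mem_edgeFinset, mem_edgeSet, compl_adj]
      exact ⟨fun h => hpB (h ▸ hpA), hna⟩
    · intro p hp p' hp' heq
      simp only [Finset.mem_filter, Finset.mem_product, Finset.mem_compl] at hp hp'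
      rw [Sym2.eq_iff] at heq
      rcases heq with ⟨ha, hb⟩ | ⟨ha, hb⟩
      · exact Prod.ext ha hb
      · exact absurd (ha ▸ hp.1.1) hp'.1.2
    · intro e he
      rw [mem_edgeFinset] at he
      induction e with
      | _ u w =>
        rw [mem_edgeSet, compl_adj] at he
        obtain ⟨hne, hna⟩ := he
        by_cases huA : u ∈ A
        · have hwB : w ∈ Aᶜ := by
            rw [Finset.mem_compl]; intro hwA; exact hna (h1 u huA w hwA hne)
          exact ⟨(u, w), Finset.mem_filter.mpr ⟨Finset.mem_product.mpr ⟨huA, hwB⟩, hna⟩, rfl⟩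
        · have huB : u ∈ Aᶜ := Finset.mem_compl.mpr huA
          have hwA : w ∈ A := by
            by_contra hwA
            exact hna (h2 u huB w (Finset.mem_compl.mpr hwA) hne)
          exact ⟨(w, u), Finset.mem_filter.mpr ⟨Finset.mem_product.mpr ⟨hwA, huB⟩,
            fun h => hna h.symm⟩, Sym2.eq_swap⟩
  have hsplit := Finset.card_filter_add_card_filter_not
    (s := A ×ˢ Aᶜ) (p := fun p => G.Adj p.1 p.2)
  rw [Finset.card_product] at hsplit
  omega

lemma aux_disconn (G : SimpleGraph W) (A : Finset W) (c : W)
    (hc : ∀ a ∈ A, ∀ b ∈ Aᶜ, G.Adj a b → a = c ∨ b = c)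
    (x y : W) (hx : x ∈ A) (hxc : x ≠ c) (hy : y ∈ Aᶜ) (hyc : y ≠ c) :
    ¬ (G.induce {w : W | w ≠ c}).Connected := by
  intro hconn
  have hreach := hconn.preconnected ⟨x, hxc⟩ ⟨y, hyc⟩
  obtain ⟨p⟩ := hreach
  suffices hkey : ∀ (u w : {w : W | w ≠ c}) (_ : (G.induce {w : W | w ≠ c}).Walk u w),
      (u : W) ∈ A → (w : W) ∈ A by
    have := hkey _ _ p hx
    rw [Finset.mem_compl] at hy
    exact hy this
  intro u w p
  induction p with
  | nil => exact id
  | @cons a b w' hadj p' ih =>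
    intro haA
    apply ih
    by_cases hbA : (b : W) ∈ A
    · exact hbA
    · exfalso
      have hGadj : G.Adj a b := hadj
      rcases hc a haA b (Finset.mem_compl.mpr hbA) hGadj with h | h
      · exact a.prop h
      · exact b.prop h

lemma aux_compl_sum (G : SimpleGraph W) [DecidableRel G.Adj] :
    G.edgeFinset.card + Gᶜ.edgeFinset.card = (Fintype.card W).choose 2 := by
  classical
  rw [← card_edgeFinset_top_eq_card_choose_two]
  have hdisj : Disjoint G.edgeFinset Gᶜ.edgeFinset := by
    rw [Finset.disjoint_left]
    intro e he1 he2
    rw [mem_edgeFinset] at he1 he2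
    induction e with
    | _ u w =>
      rw [mem_edgeSet] at he1 he2
      rw [compl_adj] at he2
      exact he2.2 he1
  rw [← Finset.card_union_of_disjoint hdisj]
  congr 1
  ext e
  simp only [Finset.mem_union, mem_edgeFinset]
  induction e with
  | _ u w =>
    rw [mem_edgeSet, mem_edgeSet, mem_edgeSet, compl_adj, top_adj]
    constructor
    · rintro (h | h)
      · exact h.ne
      · exact h.1
    · intro hne
      by_cases h : G.Adj u w
      · exact Or.inl h
      · exact Or.inr ⟨hne, h⟩

lemma aux_choose_split (n : ℕ) : n.choose 2 = n ^ 2 / 4 + (n - 1) ^ 2 / 4 := by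
  rw [Nat.choose_two_right]
  rcases Nat.even_or_odd n with ⟨k, rfl⟩ | ⟨k, rfl⟩
  · rcases Nat.eq_zero_or_pos k with rfl | hk
    · norm_num
    · obtain ⟨j, rfl⟩ : ∃ j, k = j + 1 := ⟨k - 1, by omega⟩
      have hsub : j + 1 + (j + 1) - 1 = 2 * j + 1 := by omega
      have e1 : (j + 1 + (j + 1)) * (j + 1 + (j + 1) - 1) = 2 * (2 * (j * j) + 3 * j + 1) := by
        rw [hsub]; ring
      have e2 : (j + 1 + (j + 1)) ^ 2 = 4 * (j * j + 2 * j + 1) := by ring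
      have e3 : (j + 1 + (j + 1) - 1) ^ 2 = 4 * (j * j + j) + 1 := by
        rw [hsub]; ring
      rw [e1, e2, e3, Nat.mul_div_cancel_left _ (by norm_num : 0 < 2),
        Nat.mul_div_cancel_left _ (by norm_num : 0 < 4), Nat.mul_add_div (by norm_num : 0 < 4)]
      omega
  · have hsub : 2 * k + 1 - 1 = 2 * k := by omega
    have e1 : (2 * k + 1) * (2 * k + 1 - 1) = 2 * (2 * (k * k) + k) := by rw [hsub]; ring
    have e2 : (2 * k + 1) ^ 2 = 4 * (k * k + k) + 1 := by ring
    have e3 : (2 * k + 1 - 1) ^ 2 = 4 * (k * k) := by rw [hsub]; ring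
    rw [e1, e2, e3, Nat.mul_div_cancel_left _ (by norm_num : 0 < 2),
      Nat.mul_div_cancel_left _ (by norm_num : 0 < 4), Nat.mul_add_div (by norm_num : 0 < 4)]
    omega

lemma aux_noK4m {V : Type*} [Fintype V] [DecidableEq V] (G : SimpleGraph V)
    (h42 : IsSTGraph G 4 2) : NoK4m Gᶜ := by
  intro x y z w hxy hyz hzx hxw hyw
  by_contra hzw
  rw [compl_adj] at hxy hyz hzx hxw hyw
  set S : Finset V := {x, y, z, w} with hSdef
  have hxz : x ≠ z := fun h => hzx.1 h.symm
  have hScard : S.card = 4 := by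
    rw [hSdef]
    rw [Finset.card_insert_of_notMem (by simp [hxy.1, hxz, hxw.1]),
      Finset.card_insert_of_notMem (by simp [hyz.1, hyw.1]),
      Finset.card_insert_of_notMem (by simp [hzw]), Finset.card_singleton]
  have h2 := h42.2 S hScard
  have hsub : {e : Sym2 V | e ∈ G.edgeSet ∧ ∀ v ∈ e, v ∈ S} ⊆ {s(z, w)} := by
    intro e he
    obtain ⟨heG, hmem⟩ := he
    induction e with
    | _ a b =>
      have ha := hmem a (by simp)
      have hb := hmem b (by simp)
      rw [mem_edgeSet] at heG
      have hne := heG.ne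
      simp only [hSdef, Finset.mem_insert, Finset.mem_singleton] at ha hb
      simp only [Set.mem_singleton_iff]
      rcases ha with rfl | rfl | rfl | rfl <;> rcases hb with rfl | rfl | rfl | rfl
      · exact absurd rfl hne
      · exact absurd heG hxy.2
      · exact absurd heG (fun h => hzx.2 h.symm)
      · exact absurd heG hxw.2
      · exact absurd heG (fun h => hxy.2 h.symm)
      · exact absurd rfl hne
      · exact absurd heG hyz.2
      · exact absurd heG hyw.2
      · exact absurd heG hzx.2
      · exact absurd heG (fun h => hyz.2 h.symm)
      · exact absurd rfl hne
      · rfl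
      · exact absurd heG (fun h => hxw.2 h.symm)
      · exact absurd heG (fun h => hyw.2 h.symm)
      · exact Sym2.eq_swap
      · exact absurd rfl hne
  have hle : edgesWithin G S ≤ 1 := by
    unfold edgesWithin
    calc {e : Sym2 V | e ∈ G.edgeSet ∧ ∀ v ∈ e, v ∈ S}.ncard
        ≤ ({s(z, w)} : Set (Sym2 V)).ncard := Set.ncard_le_ncard hsub (Set.finite_singleton _)
      _ = 1 := Set.ncard_singleton _
  omega

lemma aux_balance {n a b : ℕ} (hab : a + b = n) (h : n ^ 2 / 4 ≤ a * b) :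
    (a = n / 2 ∧ b = (n + 1) / 2) ∨ (b = n / 2 ∧ a = (n + 1) / 2) := by
  have h4 := aux_foursq n
  have hle : n ^ 2 ≤ 4 * (a * b) + 1 := by omega
  have hd1 : a ≤ b + 1 := by
    by_contra hcon
    push_neg at hcon
    have hc' : (b : ℤ) + 2 ≤ a := by exact_mod_cast hcon
    have : ((a : ℤ) + b) ^ 2 ≥ 4 * (a * b) + 4 := by nlinarith [sq_nonneg ((a : ℤ) - b - 2)]
    have h2 : (n : ℤ) ^ 2 ≥ 4 * (a * b) + 4 := by
      rw [← hab]; push_cast; push_cast at this; linarith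
    have h3 : n ^ 2 ≥ 4 * (a * b) + 4 := by exact_mod_cast h2
    omega
  have hd2 : b ≤ a + 1 := by
    by_contra hcon
    push_neg at hcon
    have hc' : (a : ℤ) + 2 ≤ b := by exact_mod_cast hcon
    have : ((a : ℤ) + b) ^ 2 ≥ 4 * (a * b) + 4 := by nlinarith [sq_nonneg ((b : ℤ) - a - 2)]
    have h2 : (n : ℤ) ^ 2 ≥ 4 * (a * b) + 4 := by
      rw [← hab]; push_cast; push_cast at this; linarith
    have h3 : n ^ 2 ≥ 4 * (a * b) + 4 := by exact_mod_cast h2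
    omega
  omega

lemma aux_halves (n : ℕ) : n / 2 * ((n + 1) / 2) = n ^ 2 / 4 := by
  rcases Nat.even_or_odd n with ⟨k, rfl⟩ | ⟨k, rfl⟩
  · have h1 : (k + k) / 2 = k := by omega
    have h2 : (k + k + 1) / 2 = k := by omega
    rw [h1, h2, show (k + k) ^ 2 = 4 * (k * k) by ring,
      Nat.mul_div_cancel_left _ (by norm_num : 0 < 4)]
  · have h1 : (2 * k + 1) / 2 = k := by omega
    have h2 : (2 * k + 1 + 1) / 2 = k + 1 := by omega
    rw [h1, h2, show (2 * k + 1) ^ 2 = 4 * (k * (k + 1)) + 1 by ring,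
      Nat.mul_add_div (by norm_num : 0 < 4)]
    omega

/-- Key structural result under near-extremality. -/
lemma key_struct {V : Type*} [Fintype V] [DecidableEq V] (G : SimpleGraph V)
    [DecidableRel G.Adj] (h2c : TwoConnected G) (hn : 10 ≤ Fintype.card V)
    (htf : ∀ a b c, Gᶜ.Adj a b → Gᶜ.Adj b c → ¬ Gᶜ.Adj a c)
    (hge : Fintype.card V ^ 2 / 4 ≤ Gᶜ.edgeFinset.card + 2) :
    ∃ A : Finset V,
      (∀ a ∈ A, ∀ b ∈ A, a ≠ b → G.Adj a b) ∧
      (∀ a ∈ Aᶜ, ∀ b ∈ Aᶜ, a ≠ b → G.Adj a b) ∧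
      2 ≤ A.card ∧ 2 ≤ Aᶜ.card ∧
      Gᶜ.edgeFinset.card + ((A ×ˢ Aᶜ).filter (fun p => G.Adj p.1 p.2)).card
        = A.card * Aᶜ.card ∧
      ¬ ∃ c, ∀ p ∈ (A ×ˢ Aᶜ).filter (fun p => G.Adj p.1 p.2), p.1 = c ∨ p.2 = c := by
  classical
  obtain ⟨A, hAind, hBind, hA2, hB2⟩ := structure_aux Gᶜ htf hn hge
  have h1 : ∀ a ∈ A, ∀ b ∈ A, a ≠ b → G.Adj a b := by
    intro a ha b hb hne
    by_contra hadj
    exact hAind a ha b hb ((compl_adj G a b).mpr ⟨hne, hadj⟩)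
  have h2 : ∀ a ∈ Aᶜ, ∀ b ∈ Aᶜ, a ≠ b → G.Adj a b := by
    intro a ha b hb hne
    by_contra hadj
    exact hBind a ha b hb ((compl_adj G a b).mpr ⟨hne, hadj⟩)
  refine ⟨A, h1, h2, hA2, hB2, aux_cross_count G A h1 h2, ?_⟩
  rintro ⟨c, hc⟩
  obtain ⟨x, hxA, hxc⟩ := Finset.exists_mem_ne (s := A) (by omega) c
  obtain ⟨y, hyB, hyc⟩ := Finset.exists_mem_ne (s := Aᶜ) (by omega) c
  refine aux_disconn G A c ?_ x y hxA hxc hyB hyc (h2c.2 c)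
  intro a ha b hb hab
  exact hc (a, b) (Finset.mem_filter.mpr ⟨Finset.mem_product.mpr ⟨ha, hb⟩, hab⟩)

lemma aux_cross_two {A : Type*} [Nonempty A] (cross : Finset (A × A))
    (hNT : ¬ ∃ c, ∀ p ∈ cross, p.1 = c ∨ p.2 = c) : 2 ≤ cross.card := by
  by_contra h
  push_neg at h
  apply hNT
  rcases Nat.eq_zero_or_pos cross.card with h0 | hpos
  · refine ⟨Classical.arbitrary A, fun p hp => ?_⟩
    rw [Finset.card_eq_zero] at h0
    rw [h0] at hp
    exact absurd hp (Finset.notMem_empty p)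
  · have h1 : cross.card = 1 := by omega
    obtain ⟨p, hp⟩ := Finset.card_eq_one.mp h1
    refine ⟨p.1, fun q hq => ?_⟩
    rw [hp, Finset.mem_singleton] at hq
    subst hq
    exact Or.inl rfl

end Aux

/-- Every 2-connected [4,2]-graph of order n ≥ 10 has at least ⌊(n-1)²/4⌋ + 2 edges,
with equality iff G is K_{⌊n/2⌋} + K_{⌈n/2⌉} plus two cross edges forming a matching. -/
theorem stmt_13 {V : Type*} [Fintype V] [DecidableEq V] (G : SimpleGraph V)
    (h42 : IsSTGraph G 4 2) (h2c : TwoConnected G) (hn : 10 ≤ Fintype.card V) :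
    (Fintype.card V - 1) ^ 2 / 4 + 2 ≤ G.edgeSet.ncard ∧
      (G.edgeSet.ncard = (Fintype.card V - 1) ^ 2 / 4 + 2 ↔
        ∃ A B : Finset V, Disjoint A B ∧ A ∪ B = Finset.univ ∧
          A.card = Fintype.card V / 2 ∧ B.card = (Fintype.card V + 1) / 2 ∧
          G.IsClique (A : Set V) ∧ G.IsClique (B : Set V) ∧
          ∃ a₁ a₂, a₁ ∈ A ∧ a₂ ∈ A ∧ ∃ b₁ b₂, b₁ ∈ B ∧ b₂ ∈ B ∧
            a₁ ≠ a₂ ∧ b₁ ≠ b₂ ∧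
            ∀ a ∈ A, ∀ b ∈ B,
              (G.Adj a b ↔ (a = a₁ ∧ b = b₁) ∨ (a = a₂ ∧ b = b₂))) := by
  classical
  letI : DecidableRel G.Adj := Classical.decRel _
  have hNE : Nonempty V := Fintype.card_pos_iff.mp (by omega)
  set n := Fintype.card V with hndef
  have hK4 : NoK4m Gᶜ := aux_noK4m G h42
  have hEcard : G.edgeSet.ncard = G.edgeFinset.card := by
    rw [← Set.ncard_coe_finset, SimpleGraph.coe_edgeFinset]
  have hsum : G.edgeFinset.card + Gᶜ.edgeFinset.card = n.choose 2 := aux_compl_sum G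
  have hchoose : n.choose 2 = n ^ 2 / 4 + (n - 1) ^ 2 / 4 := aux_choose_split n
  have hF := aux_foursq n
  have tfree : n ^ 2 / 4 ≤ Gᶜ.edgeFinset.card + 2 →
      ∀ a b c, Gᶜ.Adj a b → Gᶜ.Adj b c → ¬ Gᶜ.Adj a c := by
    intro hge a b c h1' h2' h3'
    have := k4m_triangle_bound Gᶜ hK4 hn a b c h1' h2' h3'.symm
    rw [← hndef] at this
    omega
  have main1 : Gᶜ.edgeFinset.card + 2 ≤ n ^ 2 / 4 := by
    by_contra hcon
    push_neg at hcon
    have hge : n ^ 2 / 4 ≤ Gᶜ.edgeFinset.card + 2 := by omega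
    obtain ⟨A, h1, h2, hA2, hB2, hcount, hNT⟩ := key_struct G h2c hn (tfree hge) hge
    have hcards : A.card + Aᶜ.card = n := by rw [hndef]; exact Finset.card_add_card_compl A
    have hprod : A.card * Aᶜ.card ≤ n ^ 2 / 4 := by
      have := aux_amgm A.card Aᶜ.card
      rwa [hcards] at this
    have hcross2 := aux_cross_two _ hNT
    omega
  refine ⟨by rw [hEcard]; omega, ?_, ?_⟩
  · -- equality implies structure
    intro heq
    rw [hEcard] at heq
    have hh : Gᶜ.edgeFinset.card + 2 = n ^ 2 / 4 := by omega
    have hge : n ^ 2 / 4 ≤ Gᶜ.edgeFinset.card + 2 := le_of_eq hh.symm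
    obtain ⟨A, h1, h2, hA2, hB2, hcount, hNT⟩ := key_struct G h2c hn (tfree hge) hge
    have hcards : A.card + Aᶜ.card = n := by rw [hndef]; exact Finset.card_add_card_compl A
    have hprod : A.card * Aᶜ.card ≤ n ^ 2 / 4 := by
      have := aux_amgm A.card Aᶜ.card
      rwa [hcards] at this
    have hcross2 := aux_cross_two _ hNT
    have hcc1 : ((A ×ˢ Aᶜ).filter (fun p => G.Adj p.1 p.2)).card = 2 := by omega
    have hcc2 : A.card * Aᶜ.card = n ^ 2 / 4 := by omega
    obtain ⟨p, q, hpq, hcrosseq⟩ := Finset.card_eq_two.mp hcc1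
    have hbal := aux_balance hcards (le_of_eq hcc2.symm)
    have hp : p ∈ (A ×ˢ Aᶜ).filter (fun p => G.Adj p.1 p.2) := by rw [hcrosseq]; simp
    have hq : q ∈ (A ×ˢ Aᶜ).filter (fun p => G.Adj p.1 p.2) := by rw [hcrosseq]; simp
    rw [Finset.mem_filter, Finset.mem_product] at hp hq
    have hne1 : p.1 ≠ q.1 := by
      intro h
      apply hNT
      refine ⟨p.1, fun r hr => ?_⟩
      rw [hcrosseq] at hr
      rcases Finset.mem_insert.mp hr with rfl | hr'
      · exact Or.inl rfl
      · rw [Finset.mem_singleton] at hr'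
        subst hr'
        exact Or.inl h.symm
    have hne2 : p.2 ≠ q.2 := by
      intro h
      apply hNT
      refine ⟨p.2, fun r hr => ?_⟩
      rw [hcrosseq] at hr
      rcases Finset.mem_insert.mp hr with rfl | hr'
      · exact Or.inr rfl
      · rw [Finset.mem_singleton] at hr'
        subst hr'
        exact Or.inr h.symm
    have hadjchar : ∀ a ∈ A, ∀ b ∈ Aᶜ,
        (G.Adj a b ↔ (a = p.1 ∧ b = p.2) ∨ (a = q.1 ∧ b = q.2)) := by
      intro a ha b hb
      constructor
      · intro hab
        have hmem : (a, b) ∈ (A ×ˢ Aᶜ).filter (fun p => G.Adj p.1 p.2) :=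
          Finset.mem_filter.mpr ⟨Finset.mem_product.mpr ⟨ha, hb⟩, hab⟩
        rw [hcrosseq] at hmem
        rcases Finset.mem_insert.mp hmem with h | h
        · left
          exact ⟨congrArg Prod.fst h, congrArg Prod.snd h⟩
        · right
          rw [Finset.mem_singleton] at h
          exact ⟨congrArg Prod.fst h, congrArg Prod.snd h⟩
      · rintro (⟨rfl, rfl⟩ | ⟨rfl, rfl⟩)
        · exact hp.2
        · exact hq.2
    have hclique1 : G.IsClique (A : Set V) := by
      rw [SimpleGraph.isClique_iff]
      intro a ha b hb hne
      exact h1 a (Finset.mem_coe.mp ha) b (Finset.mem_coe.mp hb) hne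
    have hclique2 : G.IsClique ((Aᶜ : Finset V) : Set V) := by
      rw [SimpleGraph.isClique_iff]
      intro a ha b hb hne
      exact h2 a (Finset.mem_coe.mp ha) b (Finset.mem_coe.mp hb) hne
    rcases hbal with ⟨hA_, hB_⟩ | ⟨hB_, hA_⟩
    · exact ⟨A, Aᶜ, disjoint_compl_right, Finset.union_compl A, hA_, hB_,
        hclique1, hclique2, p.1, q.1, hp.1.1, hq.1.1, p.2, q.2, hp.1.2, hq.1.2,
        hne1, hne2, hadjchar⟩
    · refine ⟨Aᶜ, A, disjoint_compl_left, by rw [Finset.union_comm, Finset.union_compl],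
        hB_, hA_, hclique2, hclique1, p.2, q.2, hp.1.2, hq.1.2, p.1, q.1, hp.1.1, hq.1.1,
        hne2, hne1, ?_⟩
      intro a ha b hb
      rw [G.adj_comm, hadjchar b hb a ha]
      constructor
      · rintro (⟨h1', h2'⟩ | ⟨h1', h2'⟩)
        · exact Or.inl ⟨h2', h1'⟩
        · exact Or.inr ⟨h2', h1'⟩
      · rintro (⟨h1', h2'⟩ | ⟨h1', h2'⟩)
        · exact Or.inl ⟨h2', h1'⟩
        · exact Or.inr ⟨h2', h1'⟩
  · -- structure implies equality
    rintro ⟨A, B, hdisj, hunion, hcardA, hcardB, hclA, hclB, a₁, a₂, ha₁, ha₂,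
      b₁, b₂, hb₁, hb₂, hane, hbne, hadj⟩
    have hBc : B = Aᶜ := by
      ext b
      rw [Finset.mem_compl]
      constructor
      · intro hbB hbA
        exact (Finset.disjoint_left.mp hdisj) hbA hbB
      · intro hbA
        have hb' : b ∈ A ∪ B := hunion ▸ Finset.mem_univ b
        rcases Finset.mem_union.mp hb' with h | h
        · exact absurd h hbA
        · exact h
    subst hBc
    have h1 : ∀ a ∈ A, ∀ b ∈ A, a ≠ b → G.Adj a b := fun a ha b hb hne =>
      hclA (Finset.mem_coe.mpr ha) (Finset.mem_coe.mpr hb) hne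
    have h2 : ∀ a ∈ Aᶜ, ∀ b ∈ Aᶜ, a ≠ b → G.Adj a b := fun a ha b hb hne =>
      hclB (Finset.mem_coe.mpr ha) (Finset.mem_coe.mpr hb) hne
    have hcount := aux_cross_count G A h1 h2
    have hcrosseq : (A ×ˢ Aᶜ).filter (fun p => G.Adj p.1 p.2) = {(a₁, b₁), (a₂, b₂)} := by
      ext r
      simp only [Finset.mem_filter, Finset.mem_product, Finset.mem_insert,
        Finset.mem_singleton]
      constructor
      · rintro ⟨⟨hr1, hr2⟩, hr3⟩
        rcases (hadj r.1 hr1 r.2 hr2).mp hr3 with ⟨h1', h2'⟩ | ⟨h1', h2'⟩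
        · left; exact Prod.ext h1' h2'
        · right; exact Prod.ext h1' h2'
      · rintro (rfl | rfl)
        · exact ⟨⟨ha₁, hb₁⟩, (hadj a₁ ha₁ b₁ hb₁).mpr (Or.inl ⟨rfl, rfl⟩)⟩
        · exact ⟨⟨ha₂, hb₂⟩, (hadj a₂ ha₂ b₂ hb₂).mpr (Or.inr ⟨rfl, rfl⟩)⟩
    have hcross2 : ((A ×ˢ Aᶜ).filter (fun p => G.Adj p.1 p.2)).card = 2 := by
      rw [hcrosseq, Finset.card_insert_of_notMem, Finset.card_singleton]
      rw [Finset.mem_singleton]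
      exact fun h => hane (congrArg Prod.fst h)
    have hprodval : A.card * Aᶜ.card = n ^ 2 / 4 := by
      rw [hcardA, hcardB, aux_halves]
    rw [hEcard]
    omega
end

section
/- Let S be a vertex cut of a k-connected graph G and let H be a component of G − S with at least k vertices. Then the set of edges between S and V(H) contains a matching of size k. -/
/-!
A vertex set covering all edges between `S` and `H` separates `H` from the vertices outside
`S ∪ H` (there are some, since `S` is a cut), so by `k`-connectivity it has at least `k` vertices;
if `H` itself lies in the cover, `|H| ≥ k` gives the same bound. König's theorem for the bipartite
graph of `S`–`H` edges then turns this lower bound on covers into a matching of size `k`.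
-/

open SimpleGraph

/-- G is k-connected: more than k vertices, and removing fewer than k vertices
leaves a connected graph. -/
def KConnected {V : Type*} [Fintype V] (G : SimpleGraph V) (k : ℕ) : Prop :=
  k < Fintype.card V ∧
    ∀ T : Finset V, T.card < k → (G.induce ((↑T : Set V)ᶜ)).Connected

open Finset Function

section Hall

variable {ι α : Type*} [Fintype ι] [DecidableEq α]

/-- Hall's theorem with deficiency `d`. -/
theorem Finset.exists_injective_of_card_le_card_biUnion_add (t : ι → Finset α) (d : ℕ)
    (h : ∀ A : Finset ι, #A ≤ #(A.biUnion t) + d) :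
    ∃ s : Finset ι, Fintype.card ι ≤ #s + d ∧
      ∃ f : s → α, Injective f ∧ ∀ i : s, f i ∈ t i := by
  classical
  -- `d` dummy vertices adjacent to everything restore Hall's condition
  let t' : ι → Finset (α ⊕ Fin d) := fun i => (t i).map .inl ∪ univ.map .inr
  have hall : ∀ A : Finset ι, #A ≤ #(A.biUnion t') := by
    intro A
    rcases A.eq_empty_or_nonempty with rfl | hA
    · simp
    have hbiUnion : A.biUnion t' = (A.biUnion t).map .inl ∪ univ.map .inr := by
      ext (a | j) <;> simp [t', ← nonempty_def, hA]
    rw [hbiUnion, card_union_of_disjoint (by simp [disjoint_left]), card_map, card_map, card_univ,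
      Fintype.card_fin]
    exact h A
  obtain ⟨f, hf_inj, hf_mem⟩ := (all_card_le_biUnion_card_iff_exists_injective t').1 hall
  let s : Finset ι := {i | ∃ a ∈ t i, f i = .inl a}
  have hs_compl : #sᶜ ≤ d := by
    have hmaps : Set.MapsTo f ↑sᶜ ↑(univ.map (.inr : Fin d ↪ α ⊕ Fin d)) := fun i hi => by
      rcases mem_union.1 (hf_mem i) with hl | hr
      · obtain ⟨a, ha, hfa⟩ := mem_map.1 hl
        exact ((by simpa [s] using hi : ∀ x ∈ t i, f i ≠ .inl x) a ha hfa.symm).elim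
      · exact hr
    simpa using card_le_card_of_injOn f hmaps hf_inj.injOn
  choose g hg_mem hg using fun i : s => (mem_filter.1 i.2).2
  refine ⟨s, by have := card_add_card_compl s; omega, g, fun i j hij => ?_, hg_mem⟩
  exact Subtype.ext <| hf_inj <| by rw [hg, hg, hij]

/-- König's theorem: the sets `Aᶜ ∪ ⋃ i ∈ A, t i` are the minimal vertex covers of the bipartite
graph given by `t`. -/
theorem Finset.exists_matching_of_forall_le_card_compl_add_card_biUnion [DecidableEq ι]
    (t : ι → Finset α) (k : ℕ) (h : ∀ A : Finset ι, k ≤ #Aᶜ + #(A.biUnion t)) :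
    ∃ (a : Fin k → ι) (b : Fin k → α), Injective a ∧ Injective b ∧ ∀ i, b i ∈ t (a i) := by
  have hk : k ≤ Fintype.card ι := by simpa using h ∅
  obtain ⟨s, hs, f, hf_inj, hf_mem⟩ :=
    exists_injective_of_card_le_card_biUnion_add t (Fintype.card ι - k) fun A => by
      have := h A
      have := card_le_univ A
      rw [card_compl] at *
      omega
  obtain ⟨e⟩ : Nonempty (Fin k ↪ s) :=
    Embedding.nonempty_of_card_le (by rw [Fintype.card_fin, Fintype.card_coe]; omega)
  exact ⟨fun i => e i, f ∘ e, Subtype.val_injective.comp e.injective, hf_inj.comp e.injective,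
    fun i => hf_mem (e i)⟩

end Hall

theorem KConnected.le_card_of_separates {V : Type*} [Fintype V] {G : SimpleGraph V} {k : ℕ}
    (hk : KConnected G k) {H : Set V} (hHk : k ≤ H.ncard) {C : Finset V}
    (hsep : ∀ x ∈ H, ∀ y ∉ H, G.Adj x y → x ∈ C ∨ y ∈ C) {y : V} (hy : y ∉ H) (hyC : y ∉ C) :
    k ≤ #C := by
  by_contra! hC
  obtain ⟨x, hx, hxC⟩ : ∃ x ∈ H, x ∉ C := by
    by_contra! hHC
    have := Set.ncard_le_ncard hHC C.finite_toSet
    rw [Set.ncard_coe_finset] at this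
    omega
  obtain ⟨p⟩ := (hk.2 C hC).preconnected ⟨x, hxC⟩ ⟨y, hyC⟩
  obtain ⟨d, -, hd_fst, hd_snd⟩ := p.exists_boundary_dart (Subtype.val ⁻¹' H) hx hy
  rcases hsep _ hd_fst _ hd_snd d.adj with h | h
  · exact d.fst.2 h
  · exact d.snd.2 h

/-- If S is a vertex cut of a k-connected graph G and H is a component of G - S
with at least k vertices, then the edges between S and H contain a matching of size k. -/
theorem stmt_16 {V : Type*} [Fintype V] (G : SimpleGraph V) (k : ℕ)
    (hk : KConnected G k) (S : Finset V)
    (hcut : ¬ (G.induce ((↑S : Set V)ᶜ)).Connected)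
    (H : Set V) (hHS : H ⊆ (↑S : Set V)ᶜ)
    (hHconn : (G.induce H).Connected)
    (hHmax : ∀ x ∈ H, ∀ y ∉ H, (y : V) ∉ (↑S : Set V) → ¬ G.Adj x y)
    (hHk : k ≤ H.ncard) :
    ∃ (a b : Fin k → V), Function.Injective a ∧ Function.Injective b ∧
      ∀ i, a i ∈ S ∧ b i ∈ H ∧ G.Adj (a i) (b i) := by
  classical
  obtain ⟨y, hyS, hyH⟩ : ∃ y, y ∉ S ∧ y ∉ H := by
    by_contra! h
    exact hcut (Set.Subset.antisymm hHS h ▸ hHconn)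
  let t : S → Finset V := fun a => {b | b ∈ H ∧ G.Adj a b}
  suffices hcover : ∀ A : Finset S, k ≤ #Aᶜ + #(A.biUnion t) by
    obtain ⟨a, b, ha, hb, hab⟩ :=
      exists_matching_of_forall_le_card_compl_add_card_biUnion t k hcover
    refine ⟨fun i => a i, b, Subtype.val_injective.comp ha, hb, fun i => ⟨(a i).2, ?_⟩⟩
    simpa [t] using hab i
  intro A
  let C : Finset V := Aᶜ.map (.subtype _) ∪ A.biUnion t
  have hsep : ∀ x ∈ H, ∀ z ∉ H, G.Adj x z → x ∈ C ∨ z ∈ C := by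
    intro x hx z hz hxz
    by_cases hzS : z ∈ S
    · by_cases hzA : ⟨z, hzS⟩ ∈ A
      · exact .inl <| mem_union_right _ <| mem_biUnion.2 ⟨_, hzA, by simp [t, hx, hxz.symm]⟩
      · exact .inr <| mem_union_left _ <| by simp [hzS, hzA]
    · exact absurd hxz (hHmax x hx z hz hzS)
  have hyC : y ∉ C := by simp [C, t, hyS, hyH]
  calc k ≤ #C := hk.le_card_of_separates hHk hsep hyH hyC
    _ ≤ #Aᶜ + #(A.biUnion t) := (card_union_le _ _).trans (by rw [card_map])
end
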